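/- Let k be a field and n, N ≥ 1. Let f ∈ k[y₁,…,yₙ] be a homogeneous polynomial that does not lie in the ideal (y₁^N,…,yₙ^N). Then there exists g ∈ k[y₁,…,yₙ] such that the coefficient of the monomial y₁^{N−1}·y₂^{N−1}⋯yₙ^{N−1} in the product f·g is nonzero. (Equivalently, the pairing (a,b) ↦ coefficient of ∏ᵢ yᵢ^{N−1} in ab on the ring k[y₁,…,yₙ]/(y₁^N,…,yₙ^N) is nondegenerate on homogeneous elements.) -/

import Mathlib

open MvPolynomial

/-!
Since `(y₁^N,…,yₙ^N)` is a monomial ideal, `f` lies outside it exactly when some monomial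
`y^d` of `f` has all exponents `dᵢ < N`. Then `y^d` divides `∏ yᵢ^{N−1}`, and multiplying `f`
by the complementary monomial moves the nonzero coefficient of `y^d` onto `∏ yᵢ^{N−1}`.
-/

namespace MvPolynomial

variable {σ R : Type*} [CommSemiring R]

theorem mem_span_X_pow_iff {N : ℕ} {f : MvPolynomial σ R} :
    f ∈ Ideal.span (Set.range fun i : σ => (X i : MvPolynomial σ R) ^ N) ↔
      ∀ d ∈ f.support, ∃ i, N ≤ d i := by
  have hrange : (Set.range fun i : σ => (X i : MvPolynomial σ R) ^ N) =
      (fun s => monomial s (1 : R)) '' Set.range fun i => Finsupp.single i N := by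
    simp only [← Set.range_comp, Function.comp_def, X_pow_eq_monomial]
  simp [hrange, mem_ideal_span_monomial_image, Finsupp.single_le_iff]

theorem coeff_mul_monomial_tsub_of_le {d t : σ →₀ ℕ} (hdt : d ≤ t) (f : MvPolynomial σ R) :
    coeff t (f * monomial (t - d) 1) = coeff d f := by
  rw [coeff_mul_monomial', if_pos tsub_le_self, tsub_tsub_cancel_of_le hdt, mul_one]

end MvPolynomial

theorem exists_multiple_with_nonzero_top_coeff (k : Type*) [Field k]
    (n N : ℕ)
    (f : MvPolynomial (Fin n) k)
    (hfI : f ∉ Ideal.span (Set.range fun i : Fin n => (X i : MvPolynomial (Fin n) k) ^ N)) :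
    ∃ g : MvPolynomial (Fin n) k,
      MvPolynomial.coeff (Finsupp.equivFunOnFinite.symm fun _ : Fin n => N - 1) (f * g) ≠ 0 := by
  rw [mem_span_X_pow_iff] at hfI
  push Not at hfI
  obtain ⟨d, hd, hdN⟩ := hfI
  set t : Fin n →₀ ℕ := Finsupp.equivFunOnFinite.symm fun _ => N - 1
  have hdt : d ≤ t := fun i => Nat.le_sub_one_of_lt (hdN i)
  exact ⟨monomial (t - d) 1, by rwa [coeff_mul_monomial_tsub_of_le hdt, ← mem_support_iff]⟩
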